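/- (Mixing operator matrix elements.) For every real β and all bitstrings x, y, the matrix exponential of the transverse-field mixer satisfies (exp(−(iβ)•B)) x y = (cos β)^{n − d(x,y)} · (−i·sin β)^{d(x,y)}, where d(x,y) is the Hamming distance between x and y. -/

import Mathlib

/-!
The bit flips `X_j` are commuting involutions, so `exp (z • X_j) = cosh z • 1 + sinh z • X_j` and
`exp (∑ j, z_j • X_j)` is the product of these factors. Multiplying by one factor acts on the
`j`-th bit alone, through the addition formulas for `cosh` and `sinh`; hence the `(x, y)` entry is
`∏ j, (cosh z_j if x_j = y_j, else sinh z_j)`. For `z_j = -iβ` the factors are `cos β` and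
`-i sin β`.
-/

open Matrix Asymptotics

noncomputable section

abbrev Bits (n : ℕ) := Fin n → Bool

/-- `x` with bit `j` flipped. -/
def flipBit {n : ℕ} (j : Fin n) (x : Bits n) : Bits n := Function.update x j (!x j)

/-- The bit-flip operator `X_j`. -/
def Xop {n : ℕ} (j : Fin n) : Matrix (Bits n) (Bits n) ℂ :=
  fun x y => if y = flipBit j x then 1 else 0

/-- The transverse-field mixing Hamiltonian `B = ∑ⱼ Xⱼ`. -/
def Bop (n : ℕ) : Matrix (Bits n) (Bits n) ℂ := ∑ j : Fin n, Xop j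

/-- The cost Hamiltonian: diagonal matrix with entries `c x`. -/
def Cop {n : ℕ} (c : Bits n → ℝ) : Matrix (Bits n) (Bits n) ℂ :=
  Matrix.diagonal fun x => (c x : ℂ)

/-- The gradient superoperator `∇A = [B, A]`. -/
def gradB {n : ℕ} (A : Matrix (Bits n) (Bits n) ℂ) : Matrix (Bits n) (Bits n) ℂ :=
  Bop n * A - A * Bop n

/-- The gradient with respect to the cost Hamiltonian `∇_C A = [C, A]`. -/
def gradC {n : ℕ} (c : Bits n → ℝ) (A : Matrix (Bits n) (Bits n) ℂ) :
    Matrix (Bits n) (Bits n) ℂ :=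
  Cop c * A - A * Cop c

/-- The uniform superposition state `|s⟩`, every entry `(2^n)^{-1/2}`. -/
def sVec (n : ℕ) : Bits n → ℂ := fun _ => ((Real.sqrt (2 ^ n))⁻¹ : ℝ)

/-- Initial-state expectation value `⟨A⟩₀ = ⟨s|A|s⟩`. -/
def expect0 {n : ℕ} (A : Matrix (Bits n) (Bits n) ℂ) : ℂ :=
  star (sVec n) ⬝ᵥ (A *ᵥ sVec n)

/-- Partial cost difference `∂ⱼc(x) = c(x⁽ʲ⁾) − c(x)`. -/
def pd {n : ℕ} (c : Bits n → ℝ) (j : Fin n) (x : Bits n) : ℝ := c (flipBit j x) - c x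

/-- Cost divergence `dc(x) = ∑ⱼ ∂ⱼc(x)`. -/
def dcFun {n : ℕ} (c : Bits n → ℝ) (x : Bits n) : ℝ := ∑ j : Fin n, pd c j x

/-- Hamming distance between two bitstrings. -/
def hammingDist' {n : ℕ} (x y : Bits n) : ℕ :=
  (Finset.univ.filter fun j : Fin n => x j ≠ y j).card

open Complex

section Involution

variable {𝔸 : Type*} [Ring 𝔸] [Algebra ℂ 𝔸] [TopologicalSpace 𝔸] [IsTopologicalRing 𝔸]
  [ContinuousSMul ℂ 𝔸] [T2Space 𝔸]

theorem NormedSpace.exp_smul_of_mul_self_eq_one {a : 𝔸} (ha : a * a = 1) (z : ℂ) :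
    NormedSpace.exp (z • a) = cosh z • (1 : 𝔸) + sinh z • a := by
  have hpow : ∀ k, a ^ (2 * k) = 1 := fun k => by rw [pow_mul, sq, ha, one_pow]
  rw [NormedSpace.exp_eq_tsum ℂ]
  refine HasSum.tsum_eq (HasSum.even_add_odd ?_ ?_)
  · convert (hasSum_cosh z).smul_const (1 : 𝔸) using 2 with k
    rw [smul_pow, hpow, smul_smul, div_eq_inv_mul]
  · convert (hasSum_sinh z).smul_const a using 2 with k
    rw [smul_pow, pow_succ a, hpow, one_mul, smul_smul, div_eq_inv_mul]

end Involution

section Hamming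

open Finset

variable {ι : Type*} {β : ι → Type*} [Fintype ι] [∀ i, DecidableEq (β i)]

theorem card_filter_eq_eq_card_sub_hammingDist (x y : ∀ i, β i) :
    #{i | x i = y i} = Fintype.card ι - hammingDist x y := by
  have h := card_filter_add_card_filter_not (s := univ) (fun i => x i = y i)
  rw [card_univ] at h
  exact Nat.eq_sub_of_add_eq h

theorem prod_ite_eq_eq_pow_mul_pow_hammingDist {M : Type*} [CommMonoid M] (x y : ∀ i, β i)
    (a b : M) :
    ∏ i, (if x i = y i then a else b)
      = a ^ (Fintype.card ι - hammingDist x y) * b ^ hammingDist x y := by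
  rw [prod_ite, prod_const, prod_const, card_filter_eq_eq_card_sub_hammingDist]
  rfl

end Hamming

variable {n : ℕ}

theorem flipBit_apply_of_ne {j k : Fin n} (h : k ≠ j) (x : Bits n) : flipBit j x k = x k :=
  Function.update_of_ne h _ _

theorem flipBit_apply_self (j : Fin n) (x : Bits n) : flipBit j x j = !x j :=
  Function.update_self _ _ _

theorem flipBit_flipBit (j : Fin n) (x : Bits n) : flipBit j (flipBit j x) = x := by
  simp [flipBit]

theorem flipBit_comm (j k : Fin n) (x : Bits n) :
    flipBit j (flipBit k x) = flipBit k (flipBit j x) := by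
  rcases eq_or_ne j k with rfl | h
  · rfl
  simp [flipBit, Function.update_of_ne h, Function.update_of_ne h.symm, Function.update_comm h]

theorem Xop_mul_apply (j : Fin n) (M : Matrix (Bits n) (Bits n) ℂ) (x y : Bits n) :
    (Xop j * M) x y = M (flipBit j x) y := by
  simp [Matrix.mul_apply, Xop]

theorem Xop_mul_self (j : Fin n) : Xop j * Xop j = 1 := by
  ext x y
  rw [Xop_mul_apply]
  simp [Xop, Matrix.one_apply, flipBit_flipBit, eq_comm]

theorem Xop_commute (j k : Fin n) : Commute (Xop j) (Xop k) := by
  ext x y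
  simp [Xop_mul_apply, Xop, flipBit_comm]

theorem exp_smul_Xop_mul_apply (w : ℂ) (j : Fin n) (M : Matrix (Bits n) (Bits n) ℂ)
    (x y : Bits n) :
    (NormedSpace.exp (w • Xop j) * M) x y
      = cosh w * M x y + sinh w * M (flipBit j x) y := by
  rw [NormedSpace.exp_smul_of_mul_self_eq_one (Xop_mul_self j), add_mul, Matrix.add_apply,
    smul_mul_assoc, smul_mul_assoc, one_mul, Matrix.smul_apply, Matrix.smul_apply, Xop_mul_apply,
    smul_eq_mul, smul_eq_mul]

theorem Complex.cosh_mul_ite_add_sinh_mul_ite (u w : ℂ) (b b' : Bool) :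
    cosh w * (if b = b' then cosh u else sinh u)
      + sinh w * (if (!b) = b' then cosh u else sinh u)
      = if b = b' then cosh (u + w) else sinh (u + w) := by
  cases b <;> cases b' <;> simp [cosh_add, sinh_add] <;> ring

theorem cosh_mul_prod_add_sinh_mul_prod_flipBit (u : Fin n → ℂ) (a : Fin n) (w : ℂ)
    (x y : Bits n) :
    cosh w * (∏ j, if x j = y j then cosh (u j) else sinh (u j))
      + sinh w * (∏ j, if flipBit a x j = y j then cosh (u j) else sinh (u j))
      = ∏ j, if x j = y j then cosh (Function.update u a (u a + w) j)
          else sinh (Function.update u a (u a + w) j) := by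
  have hflip : ∀ j ∈ ({a}ᶜ : Finset (Fin n)),
      (if flipBit a x j = y j then cosh (u j) else sinh (u j))
        = if x j = y j then cosh (u j) else sinh (u j) := fun j hj => by
    rw [flipBit_apply_of_ne (by simpa using hj)]
  have hupdate : ∀ j ∈ ({a}ᶜ : Finset (Fin n)),
      (if x j = y j then cosh (Function.update u a (u a + w) j)
        else sinh (Function.update u a (u a + w) j))
        = if x j = y j then cosh (u j) else sinh (u j) := fun j hj => by
    rw [Function.update_of_ne (by simpa using hj)]
  rw [Fintype.prod_eq_mul_prod_compl a, Fintype.prod_eq_mul_prod_compl a,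
    Fintype.prod_eq_mul_prod_compl a, Finset.prod_congr rfl hflip, Finset.prod_congr rfl hupdate,
    Function.update_self, flipBit_apply_self, ← Complex.cosh_mul_ite_add_sinh_mul_ite]
  ring

theorem exp_sum_smul_Xop_apply (z : Fin n → ℂ) (x y : Bits n) :
    NormedSpace.exp (∑ j, z j • Xop j) x y
      = ∏ j, if x j = y j then cosh (z j) else sinh (z j) := by
  classical
  -- Outside `s` the factors are `cosh 0 = 1` and `sinh 0 = 0`, i.e. the bits there must agree.
  suffices ∀ (s : Finset (Fin n)) (x : Bits n), NormedSpace.exp (∑ j ∈ s, z j • Xop j) x y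
      = ∏ j, if x j = y j then cosh (s.piecewise z 0 j)
          else sinh (s.piecewise z 0 j) by
    simpa using this Finset.univ x
  intro s
  induction s using Finset.induction_on with
  | empty =>
    intro x
    simp [Matrix.one_apply, Finset.prod_boole, funext_iff]
  | insert a s ha ih =>
    intro x
    have hcomm : Commute (z a • Xop a) (∑ j ∈ s, z j • Xop j) :=
      Commute.sum_right _ _ _ fun j _ => ((Xop_commute a j).smul_left _).smul_right _
    rw [Finset.sum_insert ha, Matrix.exp_add_of_commute _ _ hcomm, exp_smul_Xop_mul_apply, ih, ih,
      cosh_mul_prod_add_sinh_mul_prod_flipBit, Finset.piecewise_insert,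
      Finset.piecewise_eq_of_notMem _ _ _ ha, Pi.zero_apply, zero_add]

theorem stmt14_general (n : ℕ) (β : ℝ) (x y : Bits n) :
    NormedSpace.exp ((-(Complex.I * (β : ℂ))) • Bop n) x y
      = ((Real.cos β : ℂ)) ^ (n - hammingDist' x y) *
          (-Complex.I * (Real.sin β : ℂ)) ^ hammingDist' x y := by
  have hcosh : cosh (-(Complex.I * β)) = Real.cos β := by
    rw [cosh_neg, mul_comm, cosh_mul_I, Complex.ofReal_cos]
  have hsinh : sinh (-(Complex.I * β)) = -Complex.I * Real.sin β := by
    rw [sinh_neg, mul_comm, sinh_mul_I, Complex.ofReal_sin]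
    ring
  have hdist : hammingDist' x y = hammingDist x y := rfl
  rw [Bop, Finset.smul_sum, exp_sum_smul_Xop_apply (fun _ => _), hcosh, hsinh,
    prod_ite_eq_eq_pow_mul_pow_hammingDist, Fintype.card_fin, hdist]

theorem stmt14 (n : ℕ) (hn : 1 ≤ n) (β : ℝ) (x y : Bits n) :
    NormedSpace.exp ((-(Complex.I * (β : ℂ))) • Bop n) x y
      = ((Real.cos β : ℂ)) ^ (n - hammingDist' x y) *
          (-Complex.I * (Real.sin β : ℂ)) ^ hammingDist' x y :=
  stmt14_general n β x y
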